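/- arXiv:2502.04368 — 2 statements merged into one kernel-verified Lean document; each statement's English description precedes it below -/
import Mathlib

section
/- Let V be a finite-dimensional real inner product space, K a compact group acting on V by linear isometries, with Haar probability measure dk. For λ ∈ V define φ_λ(X) = ∫_K exp(i⟨λ, k·X⟩) dk. Then for all X, Y ∈ V, ∫_K φ_λ(X + k·Y) dk = φ_λ(X) · φ_λ(Y). -/
open MeasureTheory
open scoped RealInnerProductSpace

/-!
Writing `e_Z k = exp (i ⟪l, k • Z⟫)`, the integrand on the left is
`∫_h e_X h * e_Y (h * k) dh`, since `e` of a sum is a product. Swapping the two integrals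
(Fubini for continuous functions on a compact space) and using left invariance of Haar measure,
`∫_k e_Y (h * k) dk = φ Y` for every `h`, which leaves `∫_h e_X h * φ Y dh = φ X * φ Y`.
-/

theorem integral_integral_mul_mul_eq_integral_mul_integral
    {K 𝕜 : Type*} [Group K] [TopologicalSpace K] [ContinuousMul K] [CompactSpace K]
    [MeasurableSpace K] [BorelSpace K] [RCLike 𝕜]
    (μ : Measure K) [μ.IsMulLeftInvariant] [IsFiniteMeasureOnCompacts μ]
    {f g : K → 𝕜} (hf : Continuous f) (hg : Continuous g) :
    ∫ k, ∫ h, f h * g (h * k) ∂μ ∂μ = (∫ h, f h ∂μ) * ∫ k, g k ∂μ := by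
  have hcont : Continuous (fun h k => f h * g (h * k)).uncurry :=
    (hf.comp continuous_fst).mul (hg.comp continuous_mul)
  calc ∫ k, ∫ h, f h * g (h * k) ∂μ ∂μ = ∫ h, ∫ k, f h * g (h * k) ∂μ ∂μ :=
        (integral_integral_swap_of_hasCompactSupport hcont
          (HasCompactSupport.of_compactSpace _)).symm
    _ = ∫ h, f h * ∫ k, g k ∂μ ∂μ := by
        simp_rw [integral_const_mul, integral_mul_left_eq_self]
    _ = (∫ h, f h ∂μ) * ∫ k, g k ∂μ := integral_mul_const _ _

section MotionGroup

variable {V K : Type*} [NormedAddCommGroup V] [InnerProductSpace ℝ V] [Group K]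

theorem exp_inner_map_add_map (π : K →* (V ≃ₗᵢ[ℝ] V)) (l X Y : V) (h k : K) :
    Complex.exp (Complex.I * (⟪l, π h (X + π k Y)⟫ : ℝ)) =
      Complex.exp (Complex.I * (⟪l, π h X⟫ : ℝ)) *
        Complex.exp (Complex.I * (⟪l, π (h * k) Y⟫ : ℝ)) := by
  rw [map_add, map_mul, LinearIsometryEquiv.coe_mul, Function.comp_apply, inner_add_right,
    Complex.ofReal_add, mul_add, Complex.exp_add]

theorem continuous_exp_inner_map [TopologicalSpace K] (π : K →* (V ≃ₗᵢ[ℝ] V))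
    (hπ : Continuous fun p : K × V => π p.1 p.2) (l Z : V) :
    Continuous fun k => Complex.exp (Complex.I * (⟪l, π k Z⟫ : ℝ)) := by
  have : Continuous fun k => π k Z := hπ.comp (continuous_id.prodMk continuous_const)
  fun_prop

end MotionGroup

theorem spherical_functional_equation_general
    {V K : Type*}
    [NormedAddCommGroup V] [InnerProductSpace ℝ V]
    [Group K] [TopologicalSpace K] [IsTopologicalGroup K] [CompactSpace K]
    [MeasurableSpace K] [BorelSpace K]
    (μ : Measure K) [μ.IsHaarMeasure]
    (π : K →* (V ≃ₗᵢ[ℝ] V))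
    (hπ : Continuous fun p : K × V => π p.1 p.2)
    (l : V) (φ : V → ℂ)
    (hφ : ∀ X : V, φ X = ∫ k, Complex.exp (Complex.I * (⟪l, π k X⟫ : ℝ)) ∂μ) :
    ∀ X Y : V, (∫ k, φ (X + π k Y) ∂μ) = φ X * φ Y := by
  intro X Y
  simp_rw [hφ, exp_inner_map_add_map]
  exact integral_integral_mul_mul_eq_integral_mul_integral μ
    (continuous_exp_inner_map π hπ l X) (continuous_exp_inner_map π hπ l Y)

/-- Spherical functional equation for the motion-group pair `(V ⋊ K, K)`. -/
theorem spherical_functional_equation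
    {V K : Type*}
    [NormedAddCommGroup V] [InnerProductSpace ℝ V] [FiniteDimensional ℝ V]
    [Group K] [TopologicalSpace K] [IsTopologicalGroup K] [CompactSpace K]
    [MeasurableSpace K] [BorelSpace K]
    (μ : Measure K) [μ.IsHaarMeasure] [IsProbabilityMeasure μ]
    (π : K →* (V ≃ₗᵢ[ℝ] V))
    (hπ : Continuous fun p : K × V => π p.1 p.2)
    (l : V) (φ : V → ℂ)
    (hφ : ∀ X : V, φ X = ∫ k, Complex.exp (Complex.I * (⟪l, π k X⟫ : ℝ)) ∂μ) :
    ∀ X Y : V, (∫ k, φ (X + π k Y) ∂μ) = φ X * φ Y :=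
  spherical_functional_equation_general μ π hπ l φ hφ
end

section
/- Let Σ be a finite root system in a Euclidean space E with positive system Σ⁺, simple roots Δ = {α₁, …, α_ℓ}, and multiplicities m(α) ∈ ℕ≥1. Write each α ∈ Σ⁺ as α = ∑_i n_i(α) α_i with n_i(α) ∈ ℕ. Then the infimum over nonzero λ ∈ E of ∑_{α∈Σ⁺, ⟨α,λ⟩≠0} m(α) equals the minimum over 1 ≤ i ≤ ℓ of ∑_{α∈Σ⁺, n_i(α)≥1} m(α). -/
/-!
Evaluating at the fundamental coweight `ωᵢ`, the vector with `⟪α, ωᵢ⟫ = nᵢ(α)`, shows that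
each `∑_{nᵢ(α) ≥ 1} m(α)` is a value of `n(λ)`. Conversely, `n(λ)` is invariant under the
simple reflections, since they permute `Σ⁺` up to sign and preserve `m`. When `⟪αᵢ, λ⟫ < 0`,
`sᵢ` maps the positive roots that are negative on `sᵢ λ` injectively to those other than `αᵢ`
that are negative on `λ`, so finitely many simple reflections make `λ` dominant. For dominant
`λ ≠ 0` some `⟪αᵢ, λ⟫` is positive, and then every `α` with `nᵢ(α) ≥ 1` pairs positively
with `λ`.
-/

open scoped RealInnerProductSpace Classical

namespace Module.Basis

variable {ι E : Type*} [AddCommGroup E] [Module ℝ E]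

theorem eq_zero_of_repr_nonneg_of_repr_neg_nonneg (b : Basis ι ℝ E) {x : E}
    (hx : ∀ i, 0 ≤ b.repr x i) (hnx : ∀ i, 0 ≤ b.repr (-x) i) : x = 0 :=
  b.ext_elem fun i => by
    have := hnx i
    simp only [map_neg, Finsupp.neg_apply, neg_nonneg] at this
    simpa using le_antisymm this (hx i)

end Module.Basis

namespace Submodule

variable {𝕜 E : Type*} [RCLike 𝕜] [NormedAddCommGroup E] [InnerProductSpace 𝕜 E]

theorem inner_reflection_left (K : Submodule 𝕜 E) [K.HasOrthogonalProjection] (x y : E) :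
    inner 𝕜 (K.reflection x) y = inner 𝕜 x (K.reflection y) := by
  simpa using K.reflection.inner_map_map x (K.reflection y)

theorem reflection_orthogonalComplement_singleton_apply {F : Type*} [NormedAddCommGroup F]
    [InnerProductSpace ℝ F] (v x : F) :
    (ℝ ∙ v)ᗮ.reflection x = x - (2 * ⟪x, v⟫ / ⟪v, v⟫) • v := by
  rw [reflection_orthogonal_apply, reflection_singleton_apply, real_inner_self_eq_norm_sq,
    real_inner_comm, RCLike.ofReal_real_eq_id, id]
  module

end Submodule

section SignedReflection

open Submodule

variable {E : Type*} [NormedAddCommGroup E] [InnerProductSpace ℝ E]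

-- The paper's `n(λ)`.
noncomputable def nonorthogonalWeight (S : Finset E) (m : E → ℕ) (lam : E) : ℕ :=
  ∑ α ∈ S with ⟪α, lam⟫ ≠ 0, m α

-- The permutation of `S` induced by the reflection `sᵥ` of `S ∪ -S`.
noncomputable def signedReflection (S : Finset E) (v α : E) : E :=
  if (ℝ ∙ v)ᗮ.reflection α ∈ S then (ℝ ∙ v)ᗮ.reflection α else -(ℝ ∙ v)ᗮ.reflection α

variable {S : Finset E} {v α : E}

theorem signedReflection_mem
    (h : (ℝ ∙ v)ᗮ.reflection α ∈ S ∨ -(ℝ ∙ v)ᗮ.reflection α ∈ S) :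
    signedReflection S v α ∈ S := by
  unfold signedReflection
  split_ifs with hs
  exacts [hs, h.resolve_left hs]

theorem signedReflection_signedReflection (hS : ∀ α ∈ S, -α ∈ S → α = 0) (hα : α ∈ S) :
    signedReflection S v (signedReflection S v α) = α := by
  unfold signedReflection
  by_cases h : (ℝ ∙ v)ᗮ.reflection α ∈ S
  · simp [h, hα]
  · by_cases hn : -α ∈ S
    · simp [hS α hα hn]
    · simp [h, hn]

theorem inner_signedReflection_ne_zero_iff (lam : E) :
    ⟪signedReflection S v α, lam⟫ ≠ 0 ↔ ⟪α, (ℝ ∙ v)ᗮ.reflection lam⟫ ≠ 0 := by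
  unfold signedReflection
  split_ifs <;> simp [inner_neg_left, inner_reflection_left]

theorem nonorthogonalWeight_reflection {m : E → ℕ} (hS : ∀ α ∈ S, -α ∈ S → α = 0)
    (hrefl : ∀ α ∈ S, (ℝ ∙ v)ᗮ.reflection α ∈ S ∨ -(ℝ ∙ v)ᗮ.reflection α ∈ S)
    (hm : ∀ α ∈ S, m ((ℝ ∙ v)ᗮ.reflection α) = m α ∧ m (-(ℝ ∙ v)ᗮ.reflection α) = m α)
    (lam : E) :
    nonorthogonalWeight S m ((ℝ ∙ v)ᗮ.reflection lam) = nonorthogonalWeight S m lam := by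
  have hmem : ∀ μ, ∀ α ∈ S.filter (⟪·, (ℝ ∙ v)ᗮ.reflection μ⟫ ≠ 0),
      signedReflection S v α ∈ S.filter (⟪·, μ⟫ ≠ 0) := by
    intro μ α hα
    rw [Finset.mem_filter] at hα ⊢
    exact ⟨signedReflection_mem (hrefl α hα.1), (inner_signedReflection_ne_zero_iff μ).2 hα.2⟩
  refine Finset.sum_nbij' (signedReflection S v) (signedReflection S v) (hmem lam) ?_
    (fun α hα => signedReflection_signedReflection hS (Finset.mem_filter.1 hα).1)
    (fun α hα => signedReflection_signedReflection hS (Finset.mem_filter.1 hα).1) ?_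
  · intro α hα
    simpa using hmem ((ℝ ∙ v)ᗮ.reflection lam) α (by simpa using hα)
  · intro α hα
    have := hm α (Finset.mem_filter.1 hα).1
    unfold signedReflection
    split_ifs <;> simp [this]

end SignedReflection

namespace Module.Basis

open Submodule

variable {ι E : Type*} [NormedAddCommGroup E] [InnerProductSpace ℝ E] (b : Basis ι ℝ E)

theorem inner_eq_sum_repr_mul [Fintype ι] (x y : E) : ⟪x, y⟫ = ∑ j, b.repr x j * ⟪b j, y⟫ := by
  conv_lhs => rw [← b.sum_repr x]
  simp only [sum_inner, real_inner_smul_left]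

theorem exists_inner_eq_repr [Finite ι] (i : ι) : ∃ w : E, ∀ x, ⟪x, w⟫ = b.repr x i := by
  have := Module.Finite.of_basis b
  refine ⟨(InnerProductSpace.toDual ℝ E).symm (b.coord i).toContinuousLinearMap, fun x => ?_⟩
  rw [real_inner_comm, InnerProductSpace.toDual_symm_apply]
  rfl

theorem repr_reflection_of_ne (x : E) {i j : ι} (hji : j ≠ i) :
    b.repr ((ℝ ∙ b i)ᗮ.reflection x) j = b.repr x j := by
  simp [reflection_orthogonalComplement_singleton_apply, hji.symm]

end Module.Basis

section SimpleRoots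

open Submodule Finset

variable {ι E : Type*} [NormedAddCommGroup E] [InnerProductSpace ℝ E]
  {b : Module.Basis ι ℝ E} {S : Finset E}

theorem reflection_mem_of_repr_pos (hpos : ∀ α ∈ S, ∀ j, 0 ≤ b.repr α j) {i j : ι} (hji : j ≠ i)
    {α : E} (hα : 0 < b.repr α j)
    (h : (ℝ ∙ b i)ᗮ.reflection α ∈ S ∨ -(ℝ ∙ b i)ᗮ.reflection α ∈ S) :
    (ℝ ∙ b i)ᗮ.reflection α ∈ S :=
  h.resolve_right fun hneg => by
    have := hpos _ hneg j
    rw [map_neg, Finsupp.neg_apply, b.repr_reflection_of_ne _ hji] at this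
    linarith

theorem reflection_mem_erase_filter_inner_neg [Fintype ι] (hpos : ∀ α ∈ S, ∀ j, 0 ≤ b.repr α j)
    (hsimple : ∀ i, b i ∈ S)
    (hrefl : ∀ i, ∀ α ∈ S, (ℝ ∙ b i)ᗮ.reflection α ∈ S ∨ -(ℝ ∙ b i)ᗮ.reflection α ∈ S)
    {lam : E} {i : ι} (hi : ⟪b i, lam⟫ < 0) {α : E} (hα : α ∈ S)
    (hαlam : ⟪α, (ℝ ∙ b i)ᗮ.reflection lam⟫ < 0) :
    (ℝ ∙ b i)ᗮ.reflection α ∈ (S.filter (⟪·, lam⟫ < 0)).erase (b i) := by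
  -- otherwise `α` is a nonnegative multiple of `b i`, and `⟪b i, sᵢ lam⟫ = -⟪b i, lam⟫ > 0`
  obtain ⟨j, hji, hj⟩ : ∃ j ≠ i, 0 < b.repr α j := by
    by_contra! h
    have hzero : ∀ j ≠ i, b.repr α j = 0 := fun j hji => le_antisymm (h j hji) (hpos α hα j)
    have hbi : 0 ≤ ⟪b i, (ℝ ∙ b i)ᗮ.reflection lam⟫ := by
      rw [← inner_reflection_left, reflection_orthogonalComplement_singleton_eq_neg,
        inner_neg_left]
      linarith
    rw [b.inner_eq_sum_repr_mul, Finset.sum_eq_single i (fun j _ hji => by simp [hzero j hji])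
      (by simp)] at hαlam
    nlinarith [hpos α hα i]
  have hmem := reflection_mem_of_repr_pos hpos hji hj (hrefl i α hα)
  refine mem_erase.2 ⟨fun heq => ?_, mem_filter.2 ⟨hmem, by rwa [inner_reflection_left]⟩⟩
  have : α = -b i := by
    rw [← reflection_reflection (ℝ ∙ b i)ᗮ α, heq, reflection_orthogonalComplement_singleton_eq_neg]
  exact b.ne_zero i
    (b.eq_zero_of_repr_nonneg_of_repr_neg_nonneg (hpos _ (hsimple i)) (this ▸ hpos α hα))

theorem card_filter_inner_reflection_neg_lt [Fintype ι] (hpos : ∀ α ∈ S, ∀ j, 0 ≤ b.repr α j)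
    (hsimple : ∀ i, b i ∈ S)
    (hrefl : ∀ i, ∀ α ∈ S, (ℝ ∙ b i)ᗮ.reflection α ∈ S ∨ -(ℝ ∙ b i)ᗮ.reflection α ∈ S)
    {lam : E} {i : ι} (hi : ⟪b i, lam⟫ < 0) :
    #(S.filter (⟪·, (ℝ ∙ b i)ᗮ.reflection lam⟫ < 0)) < #(S.filter (⟪·, lam⟫ < 0)) := by
  calc #(S.filter (⟪·, (ℝ ∙ b i)ᗮ.reflection lam⟫ < 0))
      ≤ #((S.filter (⟪·, lam⟫ < 0)).erase (b i)) := by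
        refine card_le_card_of_injOn _ (fun α hα => ?_)
          (reflection_involutive (ℝ ∙ b i)ᗮ).injective.injOn
        rw [coe_filter] at hα
        exact reflection_mem_erase_filter_inner_neg hpos hsimple hrefl hi hα.1 hα.2
    _ < #(S.filter (⟪·, lam⟫ < 0)) := card_erase_lt_of_mem (mem_filter.2 ⟨hsimple i, hi⟩)

theorem exists_le_nonorthogonalWeight_of_inner_nonneg [Fintype ι] {m : E → ℕ}
    (hpos : ∀ α ∈ S, ∀ j, 0 ≤ b.repr α j) {lam : E} (hlam : lam ≠ 0)
    (hdom : ∀ i, 0 ≤ ⟪b i, lam⟫) :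
    ∃ i, ∑ α ∈ S with 0 < b.repr α i, m α ≤ nonorthogonalWeight S m lam := by
  obtain ⟨i, hi⟩ : ∃ i, ⟪b i, lam⟫ ≠ 0 := by
    by_contra! h
    exact hlam (InnerProductSpace.ext_inner_left_basis b fun i => by simp [h i])
  refine ⟨i, sum_le_sum_of_subset fun α hα => ?_⟩
  obtain ⟨hαS, hαi⟩ := mem_filter.1 hα
  refine mem_filter.2 ⟨hαS, ?_⟩
  rw [b.inner_eq_sum_repr_mul]
  refine (sum_pos' (fun j _ => mul_nonneg (hpos α hαS j) (hdom j)) ⟨i, mem_univ i, ?_⟩).ne'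
  exact mul_pos hαi ((hdom i).lt_of_ne' hi)

theorem exists_nonorthogonalWeight_eq [Finite ι] {m : E → ℕ}
    (hpos : ∀ α ∈ S, ∀ j, 0 ≤ b.repr α j) (i : ι) :
    ∃ lam ≠ 0, ∑ α ∈ S with 0 < b.repr α i, m α = nonorthogonalWeight S m lam := by
  obtain ⟨w, hw⟩ := b.exists_inner_eq_repr i
  refine ⟨w, fun h => by simpa [h] using hw (b i),
    sum_congr (filter_congr fun α hα => ?_) fun _ _ => rfl⟩
  rw [hw, (hpos α hα i).lt_iff_ne']

theorem exists_le_nonorthogonalWeight [Fintype ι] {m : E → ℕ}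
    (hpos : ∀ α ∈ S, ∀ j, 0 ≤ b.repr α j) (hsimple : ∀ i, b i ∈ S)
    (hrefl : ∀ i, ∀ α ∈ S, (ℝ ∙ b i)ᗮ.reflection α ∈ S ∨ -(ℝ ∙ b i)ᗮ.reflection α ∈ S)
    (hm : ∀ i, ∀ α ∈ S,
      m ((ℝ ∙ b i)ᗮ.reflection α) = m α ∧ m (-(ℝ ∙ b i)ᗮ.reflection α) = m α)
    {lam : E} (hlam : lam ≠ 0) :
    ∃ i, ∑ α ∈ S with 0 < b.repr α i, m α ≤ nonorthogonalWeight S m lam := by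
  induction hk : #(S.filter (⟪·, lam⟫ < 0)) using Nat.strong_induction_on generalizing lam with
  | _ k ih =>
  by_cases hdom : ∀ i, 0 ≤ ⟪b i, lam⟫
  · exact exists_le_nonorthogonalWeight_of_inner_nonneg hpos hlam hdom
  obtain ⟨i, hi⟩ : ∃ i, ⟪b i, lam⟫ < 0 := by simpa using hdom
  have hS : ∀ α ∈ S, -α ∈ S → α = 0 := fun α hα hnα =>
    b.eq_zero_of_repr_nonneg_of_repr_neg_nonneg (hpos α hα) (hpos _ hnα)
  rw [← nonorthogonalWeight_reflection hS (hrefl i) (hm i)]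
  exact ih _ (hk ▸ card_filter_inner_reflection_neg_lt hpos hsimple hrefl hi)
    (by simpa using hlam) rfl

end SimpleRoots

theorem inf_n_lambda_eq_min_over_simple_roots_general
    {E : Type*} [NormedAddCommGroup E] [InnerProductSpace ℝ E]
    {ℓ : ℕ} (hℓ : 0 < ℓ)
    (b : Module.Basis (Fin ℓ) ℝ E)             -- the simple roots, a basis of E
    (Splus : Finset E)                    -- the positive roots
    (hsimple : ∀ i, b i ∈ Splus)
    (m : E → ℕ)
    (n : E → Fin ℓ → ℕ)                  -- coefficients of positive roots on simple roots
    (hn : ∀ α ∈ Splus, α = ∑ i, (n α i : ℝ) • b i)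
    -- the set Σ = Σ⁺ ∪ (−Σ⁺) is stable under the simple reflections:
    (hrefl : ∀ i, ∀ α ∈ Splus,
      (α - (2 * ⟪α, b i⟫ / ⟪b i, b i⟫) • b i ∈ Splus ∨
        -(α - (2 * ⟪α, b i⟫ / ⟪b i, b i⟫) • b i) ∈ Splus))
    -- the multiplicities are invariant under the simple reflections:
    (hminv : ∀ i, ∀ α ∈ Splus,
      m (α - (2 * ⟪α, b i⟫ / ⟪b i, b i⟫) • b i) = m α ∧
      m (-(α - (2 * ⟪α, b i⟫ / ⟪b i, b i⟫) • b i)) = m α) :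
    sInf {k : ℕ | ∃ lam : E, lam ≠ 0 ∧
        k = ∑ α ∈ Splus.filter (fun α => ⟪α, lam⟫ ≠ 0), m α}
      = Finset.univ.inf' ⟨⟨0, hℓ⟩, Finset.mem_univ _⟩
          (fun i => ∑ α ∈ Splus.filter (fun α => 1 ≤ n α i), m α) := by
  have hrepr : ∀ α ∈ Splus, ∀ i, b.repr α i = n α i := fun α hα i => by
    conv_lhs => rw [hn α hα]
    exact congrFun (b.repr_sum_self _) i
  have hpos : ∀ α ∈ Splus, ∀ i, 0 ≤ b.repr α i := fun α hα i => by
    rw [hrepr α hα i]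
    positivity
  have hM : ∀ i, ∑ α ∈ Splus.filter (fun α => 1 ≤ n α i), m α =
      ∑ α ∈ Splus with 0 < b.repr α i, m α := fun i =>
    Finset.sum_congr (Finset.filter_congr fun α hα => by rw [hrepr α hα i]; norm_cast)
      fun _ _ => rfl
  simp_rw [← Submodule.reflection_orthogonalComplement_singleton_apply] at hrefl hminv
  simp_rw [hM]
  apply le_antisymm
  · obtain ⟨i, -, hi⟩ := Finset.exists_mem_eq_inf' ⟨⟨0, hℓ⟩, Finset.mem_univ _⟩
      (fun i => ∑ α ∈ Splus with 0 < b.repr α i, m α)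
    exact hi ▸ Nat.sInf_le (exists_nonorthogonalWeight_eq hpos i)
  · refine le_csInf ⟨_, exists_nonorthogonalWeight_eq hpos ⟨0, hℓ⟩⟩ ?_
    rintro k ⟨lam, hlam, rfl⟩
    obtain ⟨i, hi⟩ := exists_le_nonorthogonalWeight hpos hsimple hrefl hminv hlam
    exact (Finset.inf'_le _ (Finset.mem_univ i)).trans hi

/-- The infimum over nonzero `λ` of `n(λ) = ∑_{α ∈ Σ⁺, ⟨α,λ⟩ ≠ 0} m(α)` equals the
minimum over simple roots `αᵢ` of `∑_{α ∈ Σ⁺, nᵢ(α) ≥ 1} m(α)` (equation (3.2) of the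
paper, defining `2κ(G)`). -/
theorem inf_n_lambda_eq_min_over_simple_roots
    {E : Type*} [NormedAddCommGroup E] [InnerProductSpace ℝ E] [FiniteDimensional ℝ E]
    {ℓ : ℕ} (hℓ : 0 < ℓ)
    (b : Module.Basis (Fin ℓ) ℝ E)             -- the simple roots, a basis of E
    (Splus : Finset E)                    -- the positive roots
    (hsimple : ∀ i, b i ∈ Splus)
    (h0 : (0 : E) ∉ Splus)
    (m : E → ℕ) (hm1 : ∀ α ∈ Splus, 1 ≤ m α)
    (n : E → Fin ℓ → ℕ)                  -- coefficients of positive roots on simple roots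
    (hn : ∀ α ∈ Splus, α = ∑ i, (n α i : ℝ) • b i)
    -- the set Σ = Σ⁺ ∪ (−Σ⁺) is stable under the simple reflections:
    (hrefl : ∀ i, ∀ α ∈ Splus,
      (α - (2 * ⟪α, b i⟫ / ⟪b i, b i⟫) • b i ∈ Splus ∨
        -(α - (2 * ⟪α, b i⟫ / ⟪b i, b i⟫) • b i) ∈ Splus))
    -- the multiplicities are invariant under the simple reflections:
    (hminv : ∀ i, ∀ α ∈ Splus,
      m (α - (2 * ⟪α, b i⟫ / ⟪b i, b i⟫) • b i) = m α ∧
      m (-(α - (2 * ⟪α, b i⟫ / ⟪b i, b i⟫) • b i)) = m α) :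
    sInf {k : ℕ | ∃ lam : E, lam ≠ 0 ∧
        k = ∑ α ∈ Splus.filter (fun α => ⟪α, lam⟫ ≠ 0), m α}
      = Finset.univ.inf' ⟨⟨0, hℓ⟩, Finset.mem_univ _⟩
          (fun i => ∑ α ∈ Splus.filter (fun α => 1 ≤ n α i), m α) :=
  inf_n_lambda_eq_min_over_simple_roots_general hℓ b Splus hsimple m n hn hrefl hminv
end
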